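/- arXiv:2509.07828 — 5 statements merged into one kernel-verified Lean document; each statement's English description precedes it below -/
import Mathlib

section
/- Law of large numbers for Martin-Löf P-random sequences: Let Ω be an alphabet and P a finite probability space on Ω. If α ∈ Ω^∞ is Martin-Löf random with respect to the Bernoulli measure λ_P, then for every a ∈ Ω, the relative frequency N_a(α↾n)/n converges to P(a) as n → ∞, where N_a(σ) is the number of occurrences of a in the finite string σ and α↾n is the length-n prefix of α. -/
open MeasureTheory Filter

/-- The cylinder set of all infinite sequences extending the finite string `σ`. -/
def cylinder {Ω : Type*} (σ : List Ω) : Set (ℕ → Ω) :=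
  {α | ∀ i : Fin σ.length, α i = σ.get i}

/-- The open set `[S]` generated by a set `S` of finite strings. -/
def openCyl {Ω : Type*} (S : Set (List Ω)) : Set (ℕ → Ω) :=
  ⋃ σ ∈ S, cylinder σ

/-- A set of strings is prefix-free if no member is a proper prefix of another. -/
def PrefixFreeSet {Ω : Type*} (S : Set (List Ω)) : Prop :=
  ∀ σ ∈ S, ∀ τ ∈ S, σ <+: τ → σ = τ

/-- A set is recursively enumerable: the domain of a partial recursive function. -/
def IsRE {α : Type*} [Primcodable α] (p : Set α) : Prop :=
  ∃ f : α →. Unit, Partrec f ∧ ∀ a, a ∈ p ↔ (f a).Dom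

/-- A Martin-Löf test with respect to the measure `μ`: a recursively enumerable
`C ⊆ ℕ⁺ × Ω*` whose sections `Cₙ` (for `n ≥ 1`) are prefix-free with
`μ [Cₙ] < 2⁻ⁿ`. -/
def MLTest {Ω : Type*} [Primcodable Ω] [MeasurableSpace Ω]
    (μ : Measure (ℕ → Ω)) (C : Set (ℕ × List Ω)) : Prop :=
  IsRE C ∧ ∀ n : ℕ, 1 ≤ n →
    PrefixFreeSet {σ | (n, σ) ∈ C} ∧
    μ (openCyl {σ | (n, σ) ∈ C}) < (2 : ENNReal)⁻¹ ^ n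

/-- `α` is Martin-Löf random with respect to `μ` if it avoids `⋂_{n≥1} [Cₙ]`
for every Martin-Löf test `C` with respect to `μ`. -/
def MLRandom {Ω : Type*} [Primcodable Ω] [MeasurableSpace Ω]
    (μ : Measure (ℕ → Ω)) (α : ℕ → Ω) : Prop :=
  ∀ C : Set (ℕ × List Ω), MLTest μ C →
    α ∉ ⋂ n ∈ {n : ℕ | 1 ≤ n}, openCyl {σ | (n, σ) ∈ C}

/-!
Fix a set of symbols of total mass `w` and a rational `c / d > w`. Choosing `s > 1` with
`1 + w (s^d - 1) < s^c`, the exponential moment `(s^d)^(number of hits)` shows that a string of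
length `k` has frequency of hits at least `c / d` with probability at most `ρ^k`, where
`ρ = (1 + w (s^d - 1)) / s^c < 1`. Hence the minimal strings of length at least `N n` with
frequency at least `c / d` cover a set of measure at most `ρ^(N n) / (1 - ρ) < 2⁻ⁿ` for a
suitable `N`. This is a Martin-Löf test even though `P` need not be computable: enumerating it
only uses `c`, `d` and `N`. A random `α` escapes it, so its frequency is eventually below `c / d`.
Applied to `{a}` and to its complement, this gives both halves of the limit.
-/

open Finset

section Prefixes

variable {Ω : Type*}

def seqPrefix (α : ℕ → Ω) (n : ℕ) : List Ω := List.ofFn fun i : Fin n => α i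

@[simp] theorem length_seqPrefix (α : ℕ → Ω) (n : ℕ) : (seqPrefix α n).length = n := by
  simp [seqPrefix]

theorem take_seqPrefix (α : ℕ → Ω) {l n : ℕ} (h : l ≤ n) :
    (seqPrefix α n).take l = seqPrefix α l := by
  apply List.ext_getElem <;> simp [seqPrefix, h]

theorem mem_cylinder_iff {α : ℕ → Ω} {σ : List Ω} :
    α ∈ _root_.cylinder σ ↔ seqPrefix α σ.length = σ := by
  simp [_root_.cylinder, seqPrefix, List.ext_getElem_iff, Fin.forall_iff]

theorem List.countP_ofFn (p : Ω → Bool) : ∀ {k : ℕ} (f : Fin k → Ω),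
    (List.ofFn f).countP p = #{j | p (f j)}
  | 0, f => by simp
  | k + 1, f => by
    rw [List.ofFn_succ, List.countP_cons, List.countP_ofFn, Fin.card_filter_univ_succ]
    split_ifs <;> simp_all

theorem countP_seqPrefix (p : Ω → Prop) [DecidablePred p] (α : ℕ → Ω) :
    ∀ n : ℕ, (seqPrefix α n).countP (p ·) = Nat.count (fun i => p (α i)) n
  | 0 => by simp [seqPrefix]
  | n + 1 => by
    rw [seqPrefix, List.ofFn_succ_last, List.countP_append, Nat.count_succ]
    simpa [seqPrefix] using countP_seqPrefix p α n

theorem primrec_countP [Finite Ω] [Primcodable Ω] (p : Ω → Prop) [DecidablePred p] :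
    Primrec fun σ : List Ω => σ.countP (p ·) :=
  (Primrec.list_length.comp (Primrec.listFilter (Primrec.dom_finite _).primrecPred)).of_eq
    fun _ => (List.countP_eq_length_filter ..).symm

end Prefixes

section MinimalPrefixes

variable {Ω : Type*}

def minimalPrefixes (Q : List Ω → Prop) : Set (List Ω) :=
  {σ | Q σ ∧ ∀ l < σ.length, ¬ Q (σ.take l)}

theorem prefixFreeSet_minimalPrefixes (Q : List Ω → Prop) :
    PrefixFreeSet (minimalPrefixes Q) := by
  intro σ hσ τ hτ hστ
  by_contra hne
  have hlt : σ.length < τ.length :=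
    hστ.length_le.lt_of_ne fun h => hne (hστ.eq_of_length h)
  exact hτ.2 σ.length hlt (List.prefix_iff_eq_take.mp hστ ▸ hσ.1)

theorem mem_openCyl_minimalPrefixes {Q : List Ω → Prop} {α : ℕ → Ω} {n : ℕ}
    (h : Q (seqPrefix α n)) : α ∈ openCyl (minimalPrefixes Q) := by
  classical
  have hex : ∃ n, Q (seqPrefix α n) := ⟨n, h⟩
  refine Set.mem_biUnion (x := seqPrefix α (Nat.find hex)) ⟨Nat.find_spec hex, fun l hl => ?_⟩
    (mem_cylinder_iff.mpr (by rw [length_seqPrefix]))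
  rw [length_seqPrefix] at hl
  rw [take_seqPrefix α hl.le]
  exact Nat.find_min hex hl

theorem openCyl_minimalPrefixes_subset (Q : List Ω → Prop) :
    openCyl (minimalPrefixes Q) ⊆ {α | ∃ n, Q (seqPrefix α n)} := by
  intro α hα
  obtain ⟨σ, hσ, hασ⟩ := Set.mem_iUnion₂.mp hα
  exact ⟨σ.length, (mem_cylinder_iff.mp hασ).symm ▸ hσ.1⟩

theorem isRE_of_primrecPred {α : Type*} [Primcodable α] {S : Set α}
    (hS : PrimrecPred (· ∈ S)) : IsRE S :=
  ⟨_, hS.computablePred.to_re, fun _ => ⟨fun h => ⟨h, trivial⟩, fun ⟨h, _⟩ => h⟩⟩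

theorem primrecPred_minimalPrefixes [Primcodable Ω] {Q : ℕ → List Ω → Prop}
    (hQ : PrimrecRel Q) : PrimrecPred fun x : ℕ × List Ω => x.2 ∈ minimalPrefixes (Q x.1) := by
  have hR : PrimrecRel fun (l : ℕ) (x : ℕ × List Ω) => ¬ Q x.1 (x.2.take l) :=
    PrimrecPred.not <| hQ.comp (Primrec.fst.comp Primrec.snd)
      (Primrec.list_take.comp Primrec.fst (Primrec.snd.comp Primrec.snd))
  have hmin := hR.forall_mem_list.comp
    (Primrec.list_range.comp (Primrec.list_length.comp Primrec.snd)) Primrec.id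
  exact (PrimrecPred.and hQ hmin).of_eq fun x => by simp [minimalPrefixes]

theorem MLRandom.exists_forall_not [Primcodable Ω] [MeasurableSpace Ω] {μ : Measure (ℕ → Ω)}
    {α : ℕ → Ω} (hα : MLRandom μ α) {Q : ℕ → List Ω → Prop} (hQ : PrimrecRel Q)
    (hμQ : ∀ n ≥ 1, μ {β | ∃ k, Q n (seqPrefix β k)} < 2⁻¹ ^ n) :
    ∃ n, ∀ k, ¬ Q n (seqPrefix α k) := by
  by_contra! h
  refine hα {x | x.2 ∈ minimalPrefixes (Q x.1)}
    ⟨isRE_of_primrecPred (primrecPred_minimalPrefixes hQ), fun n hn =>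
      ⟨prefixFreeSet_minimalPrefixes _,
        (measure_mono (openCyl_minimalPrefixes_subset _)).trans_lt (hμQ n hn)⟩⟩ ?_
  exact Set.mem_iInter₂.mpr fun n _ => mem_openCyl_minimalPrefixes (h n).choose_spec

end MinimalPrefixes

theorem exists_nat_mul_lt_lt_mul {w q : ℝ} (hw : 0 ≤ w) (hwq : w < q) :
    ∃ c d : ℕ, 0 < d ∧ w * d < c ∧ (c : ℝ) < q * d := by
  obtain ⟨d, hd⟩ := exists_nat_gt (1 / (q - w))
  have hd' : 1 < (q - w) * d := by rwa [div_lt_iff₀' (sub_pos.2 hwq)] at hd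
  refine ⟨⌊w * d⌋₊ + 1, d, ?_, ?_, ?_⟩
  · exact_mod_cast (one_div_pos.2 (sub_pos.2 hwq)).trans hd
  · exact_mod_cast Nat.lt_floor_add_one (w * d)
  · have := Nat.floor_le (mul_nonneg hw d.cast_nonneg : 0 ≤ w * d)
    push_cast
    linarith

theorem exists_one_lt_one_add_mul_pow_sub_one_lt_pow {w : ℝ} {c d : ℕ} (h : w * d < c) :
    ∃ s : ℝ, 1 < s ∧ 1 + w * (s ^ d - 1) < s ^ c := by
  set g : ℝ → ℝ := fun s => s ^ c - w * (s ^ d - 1)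
  have hg : HasDerivAt g (c - w * d) 1 :=
    ((hasDerivAt_pow c 1).sub (((hasDerivAt_pow d 1).sub_const 1).const_mul w)).congr_deriv
      (by simp)
  obtain ⟨t, ht, htpos⟩ := ((hg.tendsto_slope_zero_right.eventually
    (lt_mem_nhds (sub_pos.2 h))).and self_mem_nhdsWithin).exists
  refine ⟨1 + t, by linarith, ?_⟩
  have : 0 < g (1 + t) - g 1 := by simpa [htpos] using ht
  simp only [g, one_pow, sub_self, mul_zero, sub_zero] at this
  linarith

theorem exists_pow_mul_div_lt_inv_two_pow {ρ : ℝ} (hρ0 : 0 ≤ ρ) (hρ1 : ρ < 1) :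
    ∃ N : ℕ, ∀ n ≥ 1, ρ ^ (N * n) / (1 - ρ) < 2⁻¹ ^ n := by
  have h1ρ : 0 < 1 - ρ := sub_pos.2 hρ1
  obtain ⟨N, hN⟩ := exists_pow_lt_of_lt_one (half_pos h1ρ) hρ1
  refine ⟨N, fun n hn => ?_⟩
  calc ρ ^ (N * n) / (1 - ρ) < ((1 - ρ) / 2) ^ n / (1 - ρ) := by
        rw [pow_mul]
        gcongr
    _ = (1 - ρ) ^ n / (1 - ρ) * 2⁻¹ ^ n := by rw [div_eq_mul_inv (1 - ρ) 2, mul_pow]; ring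
    _ ≤ 1 * 2⁻¹ ^ n := by
        gcongr
        exact (div_le_one h1ρ).2 (pow_le_of_le_one h1ρ.le (by linarith) (by omega))
    _ = 2⁻¹ ^ n := one_mul _

theorem measure_iUnion_add_le_of_le_pow {X : Type*} [MeasurableSpace X] (μ : Measure X)
    {A : ℕ → Set X} {ρ : ℝ} (hρ0 : 0 ≤ ρ) (hρ1 : ρ < 1)
    (hA : ∀ k, μ (A k) ≤ ENNReal.ofReal (ρ ^ k)) (m : ℕ) :
    μ (⋃ j, A (m + j)) ≤ ENNReal.ofReal (ρ ^ m / (1 - ρ)) :=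
  calc μ (⋃ j, A (m + j)) ≤ ∑' j, ENNReal.ofReal (ρ ^ (m + j)) :=
        (measure_iUnion_le _).trans (ENNReal.tsum_le_tsum fun j => hA (m + j))
    _ = ENNReal.ofReal (∑' j, ρ ^ m * ρ ^ j) := by
        simp_rw [pow_add]
        exact (ENNReal.ofReal_tsum_of_nonneg (fun j => by positivity)
          ((summable_geometric_of_lt_one hρ0 hρ1).mul_left _)).symm
    _ = ENNReal.ofReal (ρ ^ m / (1 - ρ)) := by
        rw [tsum_mul_left, tsum_geometric_of_lt_one hρ0 hρ1, div_eq_mul_inv]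

section Chernoff

variable {Ω : Type*} [Fintype Ω] {P : Ω → ℝ}

noncomputable def chernoffRate (P : Ω → ℝ) (p : Ω → Prop) [DecidablePred p] (s : ℝ) (c d : ℕ) : ℝ :=
  (1 + (∑ a with p a, P a) * (s ^ d - 1)) / s ^ c

theorem chernoffRate_nonneg (hP0 : ∀ a, 0 ≤ P a) (p : Ω → Prop) [DecidablePred p] {s : ℝ}
    (hs : 1 ≤ s) (c d : ℕ) : 0 ≤ chernoffRate P p s c d := by
  have := mul_nonneg (sum_nonneg fun a (_ : a ∈ ({a | p a} : Finset Ω)) => hP0 a)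
    (sub_nonneg.2 (one_le_pow₀ hs : 1 ≤ s ^ d))
  unfold chernoffRate
  positivity

theorem sum_prod_filter_le_chernoffRate_pow (hP0 : ∀ a, 0 ≤ P a) (hP1 : ∑ a, P a = 1)
    (p : Ω → Prop) [DecidablePred p] {s : ℝ} (hs : 1 ≤ s) (c d k : ℕ) :
    ∑ f : Fin k → Ω with c * k ≤ d * #{j | p (f j)}, ∏ j, P (f j) ≤
      chernoffRate P p s c d ^ k := by
  set g : Ω → ℝ := fun a => if p a then s ^ d else 1
  have hg1 : ∀ a, 1 ≤ g a := fun a => by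
    by_cases h : p a <;> simp [g, h, one_le_pow₀ hs]
  have hterm : ∀ f : Fin k → Ω, c * k ≤ d * #{j | p (f j)} →
      (∏ j, P (f j)) * s ^ (c * k) ≤ ∏ j, P (f j) * g (f j) := by
    intro f hf
    rw [prod_mul_distrib]
    gcongr
    · exact prod_nonneg fun j _ => hP0 _
    · calc s ^ (c * k) ≤ s ^ (d * #{j | p (f j)}) := pow_le_pow_right₀ hs (by linarith)
        _ = ∏ j, g (f j) := by simp [g, prod_ite, pow_mul]
  have hmass : ∑ a, P a * g a = 1 + (∑ a with p a, P a) * (s ^ d - 1) :=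
    calc ∑ a, P a * g a = ∑ a, (P a + (if p a then P a else 0) * (s ^ d - 1)) :=
          sum_congr rfl fun a _ => by simp only [g]; split_ifs <;> ring
      _ = _ := by rw [sum_add_distrib, hP1, ← sum_mul, sum_filter]
  rw [chernoffRate, div_pow, ← pow_mul, le_div_iff₀ (by positivity), sum_mul, ← hmass,
    ← Fin.prod_const k (∑ a, P a * g a), Fintype.prod_sum]
  calc _ ≤ ∑ f : Fin k → Ω with c * k ≤ d * #{j | p (f j)}, ∏ j, P (f j) * g (f j) :=
        sum_le_sum fun f hf => hterm f (mem_filter.1 hf).2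
    _ ≤ ∑ f : Fin k → Ω, ∏ j, P (f j) * g (f j) :=
        sum_le_sum_of_subset_of_nonneg (filter_subset _ _) fun f _ _ =>
          prod_nonneg fun j _ => mul_nonneg (hP0 _) (zero_le_one.trans (hg1 _))

def FreqAtLeast (p : Ω → Prop) [DecidablePred p] (c d : ℕ) (σ : List Ω) : Prop :=
  c * σ.length ≤ d * σ.countP (p ·)

instance (p : Ω → Prop) [DecidablePred p] (c d : ℕ) : DecidablePred (FreqAtLeast p c d) :=
  fun _ => inferInstanceAs (Decidable (_ ≤ _))

variable [MeasurableSpace Ω] {μ : Measure (ℕ → Ω)}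

theorem measure_setOf_seqPrefix_le (hP0 : ∀ a, 0 ≤ P a)
    (hμ : ∀ σ : List Ω, μ (cylinder σ) = ENNReal.ofReal ((σ.map P).prod))
    (Q : List Ω → Prop) [DecidablePred Q] (k : ℕ) :
    μ {α | Q (seqPrefix α k)} ≤
      ENNReal.ofReal (∑ f : Fin k → Ω with Q (List.ofFn f), ∏ j, P (f j)) :=
  calc μ {α | Q (seqPrefix α k)}
      ≤ μ (⋃ f ∈ ({f | Q (List.ofFn f)} : Finset (Fin k → Ω)), _root_.cylinder (List.ofFn f)) :=
        measure_mono fun α hα => Set.mem_iUnion₂.mpr ⟨fun j => α j, by simpa [seqPrefix] using hα,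
          mem_cylinder_iff.mpr (by simp [seqPrefix])⟩
    _ ≤ ∑ f : Fin k → Ω with Q (List.ofFn f), μ (_root_.cylinder (List.ofFn f)) :=
        measure_biUnion_finset_le _ _
    _ = ENNReal.ofReal (∑ f : Fin k → Ω with Q (List.ofFn f), ∏ j, P (f j)) := by
        rw [ENNReal.ofReal_sum_of_nonneg fun f _ => prod_nonneg fun j _ => hP0 _]
        simp [hμ, List.prod_ofFn]

theorem measure_exists_freqAtLeast_le (hP0 : ∀ a, 0 ≤ P a) (hP1 : ∑ a, P a = 1)
    (hμ : ∀ σ : List Ω, μ (cylinder σ) = ENNReal.ofReal ((σ.map P).prod))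
    (p : Ω → Prop) [DecidablePred p] {s : ℝ} (hs : 1 ≤ s) {c d : ℕ}
    (hρ : chernoffRate P p s c d < 1) (m : ℕ) :
    μ {β | ∃ k ≥ m, FreqAtLeast p c d (seqPrefix β k)} ≤
      ENNReal.ofReal (chernoffRate P p s c d ^ m / (1 - chernoffRate P p s c d)) := by
  have hk : ∀ k, μ {β | FreqAtLeast p c d (seqPrefix β k)} ≤
      ENNReal.ofReal (chernoffRate P p s c d ^ k) := fun k =>
    (measure_setOf_seqPrefix_le hP0 hμ _ k).trans <| ENNReal.ofReal_le_ofReal <| by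
      simpa only [FreqAtLeast, List.length_ofFn, List.countP_ofFn, decide_eq_true_eq] using
        sum_prod_filter_le_chernoffRate_pow hP0 hP1 p hs c d k
  refine le_trans (measure_mono fun β ⟨k, hk, hβ⟩ => Set.mem_iUnion.mpr ⟨k - m, ?_⟩)
    (measure_iUnion_add_le_of_le_pow μ (chernoffRate_nonneg hP0 p hs c d) hρ hk m)
  rwa [Nat.add_sub_cancel' hk]

end Chernoff

namespace MLRandom

variable {Ω : Type*} [Fintype Ω] [Primcodable Ω] [MeasurableSpace Ω] {P : Ω → ℝ}
  {μ : Measure (ℕ → Ω)} {α : ℕ → Ω}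

theorem eventually_mul_count_lt (hα : MLRandom μ α) (hP0 : ∀ a, 0 ≤ P a) (hP1 : ∑ a, P a = 1)
    (hμ : ∀ σ : List Ω, μ (cylinder σ) = ENNReal.ofReal ((σ.map P).prod))
    (p : Ω → Prop) [DecidablePred p] {c d : ℕ} (hcd : (∑ a with p a, P a) * d < c) :
    ∀ᶠ k in atTop, d * Nat.count (fun i => p (α i)) k < c * k := by
  obtain ⟨s, hs1, hs⟩ := exists_one_lt_one_add_mul_pow_sub_one_lt_pow hcd
  have hρ : chernoffRate P p s c d < 1 := (div_lt_one (by positivity)).2 hs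
  obtain ⟨N, hN⟩ := exists_pow_mul_div_lt_inv_two_pow (chernoffRate_nonneg hP0 p hs1.le c d) hρ
  let Q : ℕ → List Ω → Prop := fun n σ => N * n ≤ σ.length ∧ FreqAtLeast p c d σ
  have hQ : PrimrecRel Q :=
    PrimrecPred.and
      (Primrec.nat_le.comp (Primrec.nat_mul.comp (Primrec.const N) Primrec.fst)
        (Primrec.list_length.comp Primrec.snd))
      (Primrec.nat_le.comp (Primrec.nat_mul.comp (Primrec.const c)
        (Primrec.list_length.comp Primrec.snd))
        (Primrec.nat_mul.comp (Primrec.const d) ((primrec_countP p).comp Primrec.snd)))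
  have hμQ : ∀ n ≥ 1, μ {β | ∃ k, Q n (seqPrefix β k)} < 2⁻¹ ^ n := fun n hn =>
    calc μ {β | ∃ k, Q n (seqPrefix β k)}
        ≤ μ {β | ∃ k ≥ N * n, FreqAtLeast p c d (seqPrefix β k)} :=
          measure_mono fun β ⟨k, hk, hβ⟩ => ⟨k, by simpa using hk, hβ⟩
      _ ≤ _ := measure_exists_freqAtLeast_le hP0 hP1 hμ p hs1.le hρ _
      _ < 2⁻¹ ^ n := by
          rw [← ENNReal.ofReal_ofNat 2, ← ENNReal.ofReal_inv_of_pos two_pos,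
            ← ENNReal.ofReal_pow (by norm_num)]
          exact (ENNReal.ofReal_lt_ofReal_iff (by positivity)).2 (hN n hn)
  obtain ⟨n, hn⟩ := hα.exists_forall_not hQ hμQ
  filter_upwards [eventually_ge_atTop (N * n)] with k hk
  simpa [Q, FreqAtLeast, countP_seqPrefix, hk] using hn k

theorem eventually_count_div_lt (hα : MLRandom μ α) (hP0 : ∀ a, 0 ≤ P a) (hP1 : ∑ a, P a = 1)
    (hμ : ∀ σ : List Ω, μ (cylinder σ) = ENNReal.ofReal ((σ.map P).prod))
    (p : Ω → Prop) [DecidablePred p] {q : ℝ} (hq : ∑ a with p a, P a < q) :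
    ∀ᶠ n in atTop, (Nat.count (fun i => p (α i)) n : ℝ) / n < q := by
  obtain ⟨c, d, hd, hwc, hcq⟩ := exists_nat_mul_lt_lt_mul (sum_nonneg fun a _ => hP0 a) hq
  filter_upwards [hα.eventually_mul_count_lt hP0 hP1 hμ p hwc, eventually_gt_atTop 0]
    with n hn hn0
  have hn' : (d : ℝ) * Nat.count (fun i => p (α i)) n < c * n := by exact_mod_cast hn
  have hn0' : (0 : ℝ) < n := by exact_mod_cast hn0
  rw [div_lt_iff₀ hn0']
  nlinarith [(Nat.cast_pos.2 hd : (0 : ℝ) < d)]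

end MLRandom

theorem stmt4_general {Ω : Type*} [Fintype Ω] [DecidableEq Ω] [Primcodable Ω] [MeasurableSpace Ω]
    (P : Ω → ℝ) (hP0 : ∀ a, 0 ≤ P a) (hP1 : ∑ a : Ω, P a = 1)
    (μ : Measure (ℕ → Ω))
    (hμ : ∀ σ : List Ω, μ (cylinder σ) = ENNReal.ofReal ((σ.map P).prod))
    (α : ℕ → Ω) (hα : MLRandom μ α) :
    ∀ a : Ω, Tendsto
      (fun n : ℕ => ((((Finset.range n).filter fun i => α i = a).card : ℝ) / n))
      atTop (nhds (P a)) := by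
  intro a
  simp_rw [← Nat.count_eq_card_filter_range]
  refine tendsto_order.2 ⟨fun q hq => ?_, fun q hq => ?_⟩
  · have hne : ∑ b with b ≠ a, P b < 1 - q := by
      rw [filter_ne', sum_erase_eq_sub (mem_univ a), hP1]
      linarith
    filter_upwards [hα.eventually_count_div_lt hP0 hP1 hμ (· ≠ a) hne, eventually_gt_atTop 0]
      with n hn hn0
    have hsplit : (Nat.count (fun i => α i = a) n : ℝ) + Nat.count (fun i => α i ≠ a) n = n := by
      simp only [Nat.count_eq_card_filter_range]
      exact_mod_cast (card_filter_add_card_filter_not _).trans (card_range n)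
    have hn0' : (0 : ℝ) < n := by exact_mod_cast hn0
    rw [lt_div_iff₀ hn0']
    rw [div_lt_iff₀ hn0'] at hn
    linarith
  · have heq : ∑ b with b = a, P b < q := by
      rwa [filter_eq', if_pos (mem_univ a), sum_singleton]
    exact hα.eventually_count_div_lt hP0 hP1 hμ (· = a) heq

/-- The law of large numbers for Martin-Löf `P`-random sequences: if `α` is
Martin-Löf random with respect to the Bernoulli measure `λ_P` (the probability
measure `μ` with `μ([σ]) = P(σ₁)⋯P(σₙ)`), then for every `a ∈ Ω` the relative
frequency `N_a(α↾n)/n` of occurrences of `a` among the first `n` symbols of `α`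
converges to `P(a)`. -/
theorem stmt4 {Ω : Type*} [Fintype Ω] [DecidableEq Ω] [Primcodable Ω] [MeasurableSpace Ω]
    (P : Ω → ℝ) (hP0 : ∀ a, 0 ≤ P a) (hP1 : ∑ a : Ω, P a = 1)
    (μ : Measure (ℕ → Ω)) [IsProbabilityMeasure μ]
    (hμ : ∀ σ : List Ω, μ (cylinder σ) = ENNReal.ofReal ((σ.map P).prod))
    (α : ℕ → Ω) (hα : MLRandom μ α) :
    ∀ a : Ω, Tendsto
      (fun n : ℕ => ((((Finset.range n).filter fun i => α i = a).card : ℝ) / n))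
      atTop (nhds (P a)) :=
  stmt4_general P hP0 hP1 μ hμ α hα
end

section
/- Closure of Martin-Löf randomness under marginalization: Let Ω and Θ be alphabets and P a finite probability space on Ω × Θ. Let α ∈ (Ω × Θ)^∞ and let β ∈ Ω^∞ be obtained from α by replacing each element (m,l) by m. If α is Martin-Löf P-random, then β is Martin-Löf Q-random, where Q is the finite probability space on Ω defined by Q(m) = Σ_{l∈Θ} P(m,l). -/
open MeasureTheory Filter

/-! Pull a Martin-Löf test `C` for `λ_Q` back along the projection: `D_n` is the set of strings
over `Ω × Θ` whose string of first components lies in `C_n`. It is again r.e. and prefix-free, and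
it captures `α` whenever `C` captures `β`. For the measure bound, the projection-preimage of `[σ]`
is covered by the cylinders of the `|Θ|^|σ|` lifts of `σ`, whose `λ_P`-measures add up to
`λ_Q [σ]`, and `∑_{σ ∈ S} λ_Q [σ] ≤ λ_Q [S]` for prefix-free `S`.

Cylinders need not be measurable here (the σ-algebra on `Ω` is arbitrary), so the last inequality
is proved with subadditivity alone: extend a finite prefix-free family to strings of a common
length `k`; the remaining length-`k` cylinders cover the complement of its union and carry exactly
the rest of the total mass `1`. -/

open Finset

section Strings

variable {X : Type*}

lemma mem_cylinder_iff_s5 {σ : List X} {x : ℕ → X} :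
    x ∈ cylinder σ ↔ ∀ i : Fin σ.length, x i = σ.get i :=
  Iff.rfl

lemma cylinder_nil : cylinder ([] : List X) = Set.univ :=
  Set.eq_univ_of_forall fun _ i => i.elim0

lemma prefix_ofFn_iff {k : ℕ} {σ : List X} (hk : σ.length ≤ k) (τ : Fin k → X) :
    σ <+: List.ofFn τ ↔ ∀ (i : ℕ) (h : i < σ.length), τ ⟨i, h.trans_le hk⟩ = σ[i] := by
  simp [List.prefix_iff_getElem, hk, eq_comm]

lemma mem_cylinder_iff_prefix_ofFn {k : ℕ} {σ : List X} (hk : σ.length ≤ k) (x : ℕ → X) :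
    x ∈ cylinder σ ↔ σ <+: List.ofFn (fun i : Fin k => x i) := by
  simp [prefix_ofFn_iff hk, mem_cylinder_iff_s5, Fin.forall_iff]

lemma prod_dite_lt_length {M : Type*} [CommMonoid M] (f : X → M) {k : ℕ} {σ : List X}
    (hk : σ.length ≤ k) :
    ∏ i : Fin k, (if h : (i : ℕ) < σ.length then f σ[(i : ℕ)] else 1) = (σ.map f).prod := by
  rw [Fin.prod_univ_eq_prod_range (fun i => if h : i < σ.length then f σ[i] else 1),
    ← prod_range_mul_prod_Ico _ hk,
    prod_eq_one fun i hi => dif_neg (mem_Ico.mp hi).1.not_gt, mul_one,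
    ← Fin.prod_univ_fun_getElem, ← Fin.prod_univ_eq_prod_range]
  exact prod_congr rfl fun i _ => dif_pos i.isLt

lemma sum_prod_extensions [Fintype X] [DecidableEq X] (R : X → ℝ) (hR1 : ∑ x, R x = 1)
    {k : ℕ} {σ : List X} (hk : σ.length ≤ k) :
    ∑ τ : Fin k → X with σ <+: List.ofFn τ, ∏ i, R (τ i) = (σ.map R).prod := by
  have hfilter : univ.filter (fun τ : Fin k → X => σ <+: List.ofFn τ) = Fintype.piFinset
      (fun i : Fin k => if h : (i : ℕ) < σ.length then {σ[(i : ℕ)]} else univ) := by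
    ext τ
    simp only [mem_filter, mem_univ, true_and, Fintype.mem_piFinset, prefix_ofFn_iff hk,
      Fin.forall_iff]
    refine forall_congr' fun i => ?_
    by_cases h : i < σ.length
    · simp [h, h.trans_le hk]
    · simp [h]
  rw [hfilter, ← prod_univ_sum, ← prod_dite_lt_length R hk]
  refine prod_congr rfl fun i _ => ?_
  split_ifs <;> simp [hR1]

lemma PrefixFreeSet.mono {S T : Set (List X)} (hT : PrefixFreeSet T) (hST : S ⊆ T) :
    PrefixFreeSet S :=
  fun σ hσ τ hτ => hT σ (hST hσ) τ (hST hτ)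

lemma openCyl_mono {S T : Set (List X)} (hST : S ⊆ T) : openCyl S ⊆ openCyl T :=
  Set.biUnion_subset_biUnion_left hST

end Strings

section Bernoulli

variable {X : Type*} [MeasurableSpace X] {R : X → ℝ} {ν : Measure (ℕ → X)}

lemma measure_univ_eq_one
    (hν : ∀ σ : List X, ν (cylinder σ) = ENNReal.ofReal ((σ.map R).prod)) :
    ν Set.univ = 1 := by
  simpa [cylinder_nil] using hν []

variable [Fintype X]

lemma sum_measure_cylinder_extensions [DecidableEq X] (hR0 : ∀ x, 0 ≤ R x)
    (hR1 : ∑ x, R x = 1)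
    (hν : ∀ σ : List X, ν (cylinder σ) = ENNReal.ofReal ((σ.map R).prod))
    {k : ℕ} {σ : List X} (hk : σ.length ≤ k) :
    ∑ τ : Fin k → X with σ <+: List.ofFn τ, ν (cylinder (List.ofFn τ)) = ν (cylinder σ) := by
  simp_rw [hν, List.map_ofFn, List.prod_ofFn]
  rw [← ENNReal.ofReal_sum_of_nonneg fun τ _ => prod_nonneg fun i _ => hR0 (τ i)]
  exact congrArg _ (sum_prod_extensions R hR1 hk)

lemma sum_measure_cylinder_le_of_prefixFree (hR0 : ∀ x, 0 ≤ R x) (hR1 : ∑ x, R x = 1)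
    (hν : ∀ σ : List X, ν (cylinder σ) = ENNReal.ofReal ((σ.map R).prod))
    (F : Finset (List X)) (hF : PrefixFreeSet (F : Set (List X))) :
    ∑ σ ∈ F, ν (cylinder σ) ≤ ν (openCyl F) := by
  classical
  set k := F.sup List.length
  have hk : ∀ σ ∈ F, σ.length ≤ k := fun σ => le_sup
  set w : (Fin k → X) → ENNReal := fun τ => ν (cylinder (List.ofFn τ))
  set G := univ.filter fun τ : Fin k → X => ∃ σ ∈ F, σ <+: List.ofFn τ
  have hFG : ∑ σ ∈ F, ν (cylinder σ) = ∑ τ ∈ G, w τ := by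
    rw [show G = F.biUnion fun σ => univ.filter (σ <+: List.ofFn ·) by ext; simp [G],
      sum_biUnion]
    · exact (sum_congr rfl fun σ hσ => sum_measure_cylinder_extensions hR0 hR1 hν (hk σ hσ)).symm
    · intro σ hσ σ' hσ' hne
      refine disjoint_left.mpr fun τ hτ hτ' => hne ?_
      rw [mem_filter] at hτ hτ'
      rcases List.prefix_or_prefix_of_prefix hτ.2 hτ'.2 with h | h
      · exact hF σ hσ σ' hσ' h
      · exact (hF σ' hσ' σ hσ h).symm
  have htotal : ∑ τ ∈ G, w τ + ∑ τ ∈ Gᶜ, w τ = 1 := by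
    rw [sum_add_sum_compl, ← measure_univ_eq_one hν, ← cylinder_nil,
      ← sum_measure_cylinder_extensions hR0 hR1 hν (Nat.zero_le k)]
    simp [w]
  have hcover : Set.univ ⊆ openCyl F ∪ ⋃ τ ∈ Gᶜ, cylinder (List.ofFn τ) := by
    intro x _
    by_cases hx : ∃ σ ∈ F, σ <+: List.ofFn (fun i : Fin k => x i)
    · obtain ⟨σ, hσ, hpre⟩ := hx
      exact Or.inl (Set.mem_biUnion hσ ((mem_cylinder_iff_prefix_ofFn (hk σ hσ) x).mpr hpre))
    · refine Or.inr (Set.mem_biUnion (x := fun i : Fin k => x i) (by simpa [G] using hx) ?_)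
      exact (mem_cylinder_iff_prefix_ofFn (by simp) x).mpr List.prefix_rfl
  have hbound : ∑ τ ∈ G, w τ + ∑ τ ∈ Gᶜ, w τ ≤ ν (openCyl F) + ∑ τ ∈ Gᶜ, w τ :=
    calc ∑ τ ∈ G, w τ + ∑ τ ∈ Gᶜ, w τ = ν Set.univ := by rw [htotal, measure_univ_eq_one hν]
      _ ≤ ν (openCyl F) + ν (⋃ τ ∈ Gᶜ, cylinder (List.ofFn τ)) :=
        (measure_mono hcover).trans (measure_union_le _ _)
      _ ≤ ν (openCyl F) + ∑ τ ∈ Gᶜ, w τ := by gcongr; exact measure_biUnion_finset_le _ _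
  rw [hFG]
  exact ENNReal.le_of_add_le_add_right
    (ne_top_of_le_ne_top ENNReal.one_ne_top (htotal ▸ le_add_self)) hbound

lemma tsum_measure_cylinder_le_of_prefixFree (hR0 : ∀ x, 0 ≤ R x) (hR1 : ∑ x, R x = 1)
    (hν : ∀ σ : List X, ν (cylinder σ) = ENNReal.ofReal ((σ.map R).prod))
    (S : Set (List X)) (hS : PrefixFreeSet S) :
    ∑' σ : S, ν (cylinder σ) ≤ ν (openCyl S) := by
  refine ENNReal.tsum_eq_iSup_sum ▸ iSup_le fun F => ?_
  have hFS : (F.map (Function.Embedding.subtype _) : Set (List X)) ⊆ S := by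
    rw [coe_map]
    exact Subtype.coe_image_subset S F
  calc ∑ σ ∈ F, ν (cylinder σ) = ∑ σ ∈ F.map (Function.Embedding.subtype _), ν (cylinder σ) :=
        by rw [sum_map]; rfl
    _ ≤ ν (openCyl (F.map (Function.Embedding.subtype _) : Set (List X))) :=
        sum_measure_cylinder_le_of_prefixFree hR0 hR1 hν _ (hS.mono hFS)
    _ ≤ ν (openCyl S) := measure_mono (openCyl_mono hFS)

end Bernoulli

section Marginal

variable {Ω Θ : Type*} [Fintype Θ] [MeasurableSpace Ω] [MeasurableSpace Θ]
  {P : Ω × Θ → ℝ} {μ : Measure (ℕ → Ω × Θ)}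

lemma measure_preimage_fst_cylinder_le (hP0 : ∀ p, 0 ≤ P p)
    (hμ : ∀ σ : List (Ω × Θ), μ (cylinder σ) = ENNReal.ofReal ((σ.map P).prod)) (σ : List Ω) :
    μ ((Prod.fst ∘ ·) ⁻¹' cylinder σ)
      ≤ ENNReal.ofReal ((σ.map fun m => ∑ l, P (m, l)).prod) := by
  have hcover : (Prod.fst ∘ ·) ⁻¹' cylinder σ
      ⊆ ⋃ v : Fin σ.length → Θ, cylinder (List.ofFn fun i => (σ.get i, v i)) := by
    intro x hx
    refine Set.mem_iUnion.mpr ⟨fun i => (x i).2, fun i => ?_⟩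
    rw [List.get_ofFn]
    exact Prod.ext (hx (Fin.cast (by simp) i)) rfl
  calc μ ((Prod.fst ∘ ·) ⁻¹' cylinder σ)
      ≤ ∑ v : Fin σ.length → Θ, μ (cylinder (List.ofFn fun i => (σ.get i, v i))) :=
        (measure_mono hcover).trans ((measure_iUnion_le _).trans_eq (tsum_fintype _))
    _ = ENNReal.ofReal (∑ v : Fin σ.length → Θ, ∏ i, P (σ.get i, v i)) := by
        simp_rw [hμ, List.map_ofFn, List.prod_ofFn]
        exact (ENNReal.ofReal_sum_of_nonneg fun v _ => prod_nonneg fun i _ => hP0 _).symm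
    _ = ENNReal.ofReal ((σ.map fun m => ∑ l, P (m, l)).prod) := by
        rw [← Fin.prod_univ_fun_getElem, prod_univ_sum, Fintype.piFinset_univ]
        rfl

lemma measure_preimage_fst_openCyl_le [Fintype Ω] (hP0 : ∀ p, 0 ≤ P p)
    (hP1 : ∑ p : Ω × Θ, P p = 1) {Q : Ω → ℝ} (hQ : ∀ m : Ω, Q m = ∑ l : Θ, P (m, l))
    (hμ : ∀ σ : List (Ω × Θ), μ (cylinder σ) = ENNReal.ofReal ((σ.map P).prod))
    {ν : Measure (ℕ → Ω)} (hν : ∀ σ : List Ω, ν (cylinder σ) = ENNReal.ofReal ((σ.map Q).prod))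
    (S : Set (List Ω)) (hS : PrefixFreeSet S) :
    μ ((Prod.fst ∘ ·) ⁻¹' openCyl S) ≤ ν (openCyl S) := by
  obtain rfl : Q = fun m => ∑ l, P (m, l) := funext hQ
  have hQ0 : ∀ m, 0 ≤ ∑ l, P (m, l) := fun m => sum_nonneg fun l _ => hP0 _
  have hQ1 : ∑ m, ∑ l, P (m, l) = 1 := by rw [← hP1, Fintype.sum_prod_type]
  calc μ ((Prod.fst ∘ ·) ⁻¹' openCyl S)
      ≤ ∑' σ : S, μ ((Prod.fst ∘ ·) ⁻¹' cylinder σ) := by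
        rw [openCyl, Set.preimage_iUnion₂]
        exact measure_biUnion_le _ S.to_countable _
    _ ≤ ∑' σ : S, ν (cylinder σ) :=
        ENNReal.tsum_le_tsum fun σ => (hν σ).symm ▸ measure_preimage_fst_cylinder_le hP0 hμ σ
    _ ≤ ν (openCyl S) := tsum_measure_cylinder_le_of_prefixFree hQ0 hQ1 hν S hS

end Marginal

section Pullback

variable {X Y : Type*}

lemma comp_mem_cylinder_map {σ : List Y} {y : ℕ → Y} (hy : y ∈ cylinder σ) (f : Y → X) :
    f ∘ y ∈ cylinder (σ.map f) := fun i => by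
  simp [hy ⟨i, by simpa using i.isLt⟩]

lemma mem_cylinder_ofFn (y : ℕ → Y) (k : ℕ) : y ∈ cylinder (List.ofFn fun i : Fin k => y i) :=
  fun i => by simp

lemma openCyl_preimage_map (f : Y → X) (S : Set (List X)) :
    openCyl (List.map f ⁻¹' S) = (f ∘ ·) ⁻¹' openCyl S := by
  ext y
  simp only [openCyl, Set.mem_iUnion₂, Set.mem_preimage]
  constructor
  · rintro ⟨σ, hσ, hy⟩
    exact ⟨σ.map f, hσ, comp_mem_cylinder_map hy f⟩
  · rintro ⟨τ, hτ, hy⟩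
    refine ⟨List.ofFn fun i : Fin τ.length => y i, ?_, mem_cylinder_ofFn y _⟩
    convert hτ
    exact List.ext_get (by simp) fun i _ _ => by simpa using hy ⟨i, by assumption⟩

lemma PrefixFreeSet.preimage_map {S : Set (List X)} (hS : PrefixFreeSet S) (f : Y → X) :
    PrefixFreeSet (List.map f ⁻¹' S) := fun σ hσ τ hτ h =>
  h.eq_of_length (by simpa using congrArg List.length (hS _ hσ _ hτ (h.map f)))

variable [Primcodable X] [Primcodable Y]

lemma IsRE.preimage {S : Set X} (hS : IsRE S) {g : Y → X} (hg : Computable g) :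
    IsRE (g ⁻¹' S) := by
  obtain ⟨f, hf, hfS⟩ := hS
  exact ⟨fun y => f (g y), hf.comp hg, fun y => hfS (g y)⟩

variable [MeasurableSpace X] [MeasurableSpace Y] {μ : Measure (ℕ → Y)} {ν : Measure (ℕ → X)}
  {f : Y → X}

lemma MLTest.preimage_map {C : Set (ℕ × List X)} (hC : MLTest ν C) (hf : Primrec f)
    (hμν : ∀ S, PrefixFreeSet S → μ ((f ∘ ·) ⁻¹' openCyl S) ≤ ν (openCyl S)) :
    MLTest μ {p | (p.1, p.2.map f) ∈ C} := by
  refine ⟨hC.1.preimage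
    (Primrec.fst.pair (Primrec.list_map Primrec.snd (hf.comp Primrec.snd).to₂)).to_comp,
    fun n hn => ?_⟩
  obtain ⟨hpf, hlt⟩ := hC.2 n hn
  refine ⟨hpf.preimage_map f, ?_⟩
  exact (openCyl_preimage_map f {σ | (n, σ) ∈ C}) ▸ (hμν _ hpf).trans_lt hlt

theorem MLRandom.comp (hf : Primrec f)
    (hμν : ∀ S, PrefixFreeSet S → μ ((f ∘ ·) ⁻¹' openCyl S) ≤ ν (openCyl S))
    {α : ℕ → Y} (hα : MLRandom μ α) : MLRandom ν (f ∘ α) := by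
  intro C hC hfα
  refine hα _ (hC.preimage_map hf hμν) ?_
  simp only [Set.mem_iInter₂] at hfα ⊢
  intro n hn
  exact (openCyl_preimage_map f {σ | (n, σ) ∈ C}).symm ▸ hfα n hn

end Pullback

theorem stmt5_general {Ω Θ : Type*} [Fintype Ω] [Fintype Θ]
    [Primcodable Ω] [Primcodable Θ] [MeasurableSpace Ω] [MeasurableSpace Θ]
    (P : Ω × Θ → ℝ) (hP0 : ∀ p, 0 ≤ P p) (hP1 : ∑ p : Ω × Θ, P p = 1)
    (Q : Ω → ℝ) (hQ : ∀ m : Ω, Q m = ∑ l : Θ, P (m, l))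
    (μ : Measure (ℕ → Ω × Θ))
    (hμ : ∀ σ : List (Ω × Θ), μ (cylinder σ) = ENNReal.ofReal ((σ.map P).prod))
    (ν : Measure (ℕ → Ω))
    (hν : ∀ σ : List Ω, ν (cylinder σ) = ENNReal.ofReal ((σ.map Q).prod))
    (α : ℕ → Ω × Θ) (hα : MLRandom μ α)
    (β : ℕ → Ω) (hβ : ∀ n, β n = (α n).1) :
    MLRandom ν β := by
  obtain rfl : β = Prod.fst ∘ α := funext hβ
  exact hα.comp Primrec.fst fun S hS => measure_preimage_fst_openCyl_le hP0 hP1 hQ hμ hν S hS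

/-- Closure of Martin-Löf randomness under marginalization: let `P` be a finite
probability space on `Ω × Θ`, let `μ` be the Bernoulli measure `λ_P` and `ν` the
Bernoulli measure `λ_Q` of the marginal `Q(m) = Σ_{l∈Θ} P(m,l)`. If
`α ∈ (Ω × Θ)^∞` is Martin-Löf `P`-random, then its first-component projection
`β` is Martin-Löf `Q`-random. -/
theorem stmt5 {Ω Θ : Type*} [Fintype Ω] [Fintype Θ]
    [Primcodable Ω] [Primcodable Θ] [MeasurableSpace Ω] [MeasurableSpace Θ]
    (P : Ω × Θ → ℝ) (hP0 : ∀ p, 0 ≤ P p) (hP1 : ∑ p : Ω × Θ, P p = 1)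
    (Q : Ω → ℝ) (hQ : ∀ m : Ω, Q m = ∑ l : Θ, P (m, l))
    (μ : Measure (ℕ → Ω × Θ)) [IsProbabilityMeasure μ]
    (hμ : ∀ σ : List (Ω × Θ), μ (cylinder σ) = ENNReal.ofReal ((σ.map P).prod))
    (ν : Measure (ℕ → Ω)) [IsProbabilityMeasure ν]
    (hν : ∀ σ : List Ω, ν (cylinder σ) = ENNReal.ofReal ((σ.map Q).prod))
    (α : ℕ → Ω × Θ) (hα : MLRandom μ α)
    (β : ℕ → Ω) (hβ : ∀ n, β n = (α n).1) :
    MLRandom ν β :=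
  stmt5_general P hP0 hP1 Q hQ μ hμ ν hν α hα β hβ
end

section
/- In the setting of a chain of measurements M¹,…,Mⁿ where each M^k is described by measurement operators {M^k_{m_k}} on ℋ_S ⊗ ℋ̄₁ ⊗ … ⊗ ℋ̄_{k-1} satisfying the completeness equation, with unitary implementations U_k as in equation (*) and the range condition (**): let |Ψ^{k-1}⟩ ∈ ℋ_S ⊗ ℋ₁ ⊗ … ⊗ ℋ_{k-1} be written as Σ_l |Ψ[l]⟩⊗|Θ_R[l]⟩ in an orthonormal basis {|Ψ[l]⟩} of ℋ_S with |Ψ[1]⟩ = |Ψ⟩; if for each l and m_k, M^k_{m_k}(|Ψ[l]⟩⊗|Θ_R[l]⟩) = |Ψ[l]⟩⊗|Υ_R[l,m_k]⟩ (i.e., the state of the system S is unchanged by the measurement by apparatus A_k), and the state Σ_{m_k}(M^k_{m_k}|Ψ^{k-1}⟩)⊗|Φ^k[m_k]⟩ has ℋ_S-component equal to |Ψ⟩ (i.e., it lies in ℂ|Ψ⟩ ⊗ (rest)), then |Ψ^{k-1}⟩ = |Ψ⟩⊗|Θ_R[1]⟩, so the total state immediately before the measurement M^k also has the system S in the pure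 state |Ψ⟩. -/
open scoped ComplexInnerProductSpace

/-- Unchanged states propagate backward through a measurement step (system
case): let `K₁ = ℋ_S ⊗ ℋ_R` and `K₂ = K₁ ⊗ ℋ_A` carry tensor-product
inner-product structures, let `{M_{m_k}}` be measurement operators on `K₁`
satisfying the completeness equation, `{Φ[m_k]}` an orthonormal family in
`ℋ_A`, and `{Ψ[l]}` an orthonormal basis of `ℋ_S` with distinguished index
`l₀` (so `Ψ[l₀] = |Ψ⟩`). If `Ψ^{k-1} = Σ_l Ψ[l] ⊗ Θ_R[l]`, each measurement
operator acts without disturbing the system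
(`M_{m_k}(Ψ[l] ⊗ Θ_R[l]) = Ψ[l] ⊗ Υ_R[l, m_k]`), and the post-measurement state
`Σ_{m_k} (M_{m_k} Ψ^{k-1}) ⊗ Φ[m_k]` lies in `ℂ|Ψ⟩ ⊗ (rest)`, then
`Ψ^{k-1} = Ψ[l₀] ⊗ Θ_R[l₀]`, i.e. the system is in the pure state `|Ψ⟩` already
before the measurement. -/
theorem stmt13 {H R K1 A K2 : Type*}
    [NormedAddCommGroup H] [InnerProductSpace ℂ H] [FiniteDimensional ℂ H]
    [NormedAddCommGroup R] [InnerProductSpace ℂ R] [FiniteDimensional ℂ R]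
    [NormedAddCommGroup K1] [InnerProductSpace ℂ K1] [FiniteDimensional ℂ K1]
    [NormedAddCommGroup A] [InnerProductSpace ℂ A] [FiniteDimensional ℂ A]
    [NormedAddCommGroup K2] [InnerProductSpace ℂ K2] [FiniteDimensional ℂ K2]
    {Ωk : Type*} [Fintype Ωk]
    (tmul1 : H →ₗ[ℂ] R →ₗ[ℂ] K1)
    (htmul1 : ∀ (x y : H) (u v : R),
      ⟪tmul1 x u, tmul1 y v⟫ = ⟪x, y⟫ * ⟪u, v⟫)
    (tmul2 : K1 →ₗ[ℂ] A →ₗ[ℂ] K2)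
    (htmul2 : ∀ (x y : K1) (u v : A),
      ⟪tmul2 x u, tmul2 y v⟫ = ⟪x, y⟫ * ⟪u, v⟫)
    (M : Ωk → K1 →ₗ[ℂ] K1)
    (hcomp : ∑ mk : Ωk, LinearMap.adjoint (M mk) ∘ₗ M mk = LinearMap.id)
    (Φ : Ωk → A) (hΦ : Orthonormal ℂ Φ)
    {ι : Type*} [Fintype ι] (Ψfam : ι → H)
    (hON : Orthonormal ℂ Ψfam)
    (hspan : Submodule.span ℂ (Set.range Ψfam) = ⊤)
    (l₀ : ι)
    (Θ : ι → R) (Υ : ι → Ωk → R)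
    (Ψtot : K1) (hdec : Ψtot = ∑ l : ι, tmul1 (Ψfam l) (Θ l))
    (hact : ∀ (l : ι) (mk : Ωk),
      M mk (tmul1 (Ψfam l) (Θ l)) = tmul1 (Ψfam l) (Υ l mk))
    (hpost : (∑ mk : Ωk, tmul2 (M mk Ψtot) (Φ mk)) ∈
      Submodule.span ℂ
        {z : K2 | ∃ (r : R) (a : A), z = tmul2 (tmul1 (Ψfam l₀) r) a}) :
    Ψtot = tmul1 (Ψfam l₀) (Θ l₀) := by
  classical

  have hΦ' := orthonormal_iff_ite.mp hΦ
  have hON' := orthonormal_iff_ite.mp hON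
  -- The post-measurement state as a double sum
  have hM : ∀ mk : Ωk, M mk Ψtot = ∑ l : ι, tmul1 (Ψfam l) (Υ l mk) := by
    intro mk
    rw [hdec, map_sum]
    exact Finset.sum_congr rfl fun l _ => hact l mk
  -- Step 1: Υ l mk = 0 for l ≠ l₀
  have hΥ : ∀ l, l ≠ l₀ → ∀ mk, Υ l mk = 0 := by
    intro l hl mk
    have key : ∀ x : R,
        ⟪tmul2 (tmul1 (Ψfam l) x) (Φ mk), ∑ mk' : Ωk, tmul2 (M mk' Ψtot) (Φ mk')⟫ = 0 := by
      intro x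
      set w : K2 := tmul2 (tmul1 (Ψfam l) x) (Φ mk) with hw
      have hker : Submodule.span ℂ
          {z : K2 | ∃ (r : R) (a : A), z = tmul2 (tmul1 (Ψfam l₀) r) a} ≤
          LinearMap.ker ((innerSL ℂ w).toLinearMap) := by
        rw [Submodule.span_le]
        rintro z ⟨r, a, rfl⟩
        simp only [SetLike.mem_coe, LinearMap.mem_ker, ContinuousLinearMap.coe_coe,
          innerSL_apply_apply, hw]
        rw [htmul2, htmul1, hON' l l₀]
        simp [hl]
      exact hker hpost
    have hx : ∀ x : R, ⟪x, Υ l mk⟫ = (0 : ℂ) := by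
      intro x
      have h := key x
      have hcalc : ⟪tmul2 (tmul1 (Ψfam l) x) (Φ mk),
          ∑ mk' : Ωk, tmul2 (M mk' Ψtot) (Φ mk')⟫ = ⟪x, Υ l mk⟫ := by
        rw [inner_sum]
        have : ∀ mk' : Ωk, ⟪tmul2 (tmul1 (Ψfam l) x) (Φ mk), tmul2 (M mk' Ψtot) (Φ mk')⟫
            = if mk = mk' then ⟪x, Υ l mk'⟫ else 0 := by
          intro mk'
          rw [hM mk', map_sum, LinearMap.sum_apply, inner_sum]
          have : ∀ l' : ι, ⟪tmul2 (tmul1 (Ψfam l) x) (Φ mk), tmul2 (tmul1 (Ψfam l') (Υ l' mk')) (Φ mk')⟫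
              = if l = l' then ⟪x, Υ l' mk'⟫ * ⟪Φ mk, Φ mk'⟫ else 0 := by
            intro l'
            rw [htmul2, htmul1, hON' l l']
            by_cases h : l = l' <;> simp [h]
          rw [Finset.sum_congr rfl fun l' _ => this l']
          rw [Finset.sum_ite_eq (Finset.univ) l (fun l' => ⟪x, Υ l' mk'⟫ * ⟪Φ mk, Φ mk'⟫)]
          rw [hΦ' mk mk']
          by_cases h : mk = mk' <;> simp [h]
        rw [Finset.sum_congr rfl fun mk' _ => this mk']
        simp
      rw [hcalc] at h
      exact h
    have := hx (Υ l mk)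
    exact inner_self_eq_zero.mp this
  -- Step 2: tmul1 (Ψfam l) (Θ l) = 0 for l ≠ l₀
  have hzero : ∀ l, l ≠ l₀ → tmul1 (Ψfam l) (Θ l) = 0 := by
    intro l hl
    set v : K1 := tmul1 (Ψfam l) (Θ l) with hv
    have h1 : ⟪v, v⟫ = (0 : ℂ) := by
      have h2 : ⟪v, v⟫ = ⟪v, (∑ mk : Ωk, LinearMap.adjoint (M mk) ∘ₗ M mk) v⟫ := by
        rw [hcomp]; rfl
      rw [h2, LinearMap.sum_apply, inner_sum]
      have h3 : ∀ mk : Ωk, ⟪v, (LinearMap.adjoint (M mk) ∘ₗ M mk) v⟫ = (0 : ℂ) := by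
        intro mk
        rw [LinearMap.comp_apply, LinearMap.adjoint_inner_right, hv, hact l mk,
          hΥ l hl mk]
        simp
      rw [Finset.sum_congr rfl fun mk _ => h3 mk]
      simp
    exact inner_self_eq_zero.mp h1
  rw [hdec]
  rw [Finset.sum_eq_single l₀ (fun l _ hl => hzero l hl) (fun h => absurd (Finset.mem_univ l₀) h)]
end

section
/- Unchanged apparatus states propagate backward (apparatus case): Let ℋ_L, ℋ_i, ℋ_R be finite-dimensional Hilbert spaces, with orthonormal basis {|Φ^i[m]⟩}_{m∈Ω_i} of ℋ_i. Let {M_{m_k}}_{m_k∈Ω_k} be operators on ℋ_L ⊗ ℋ_i ⊗ ℋ_R satisfying the completeness equation, such that for each m ∈ Ω_i and m_k, M_{m_k} maps ℋ_L ⊗ ℂ|Φ^i[m]⟩ ⊗ ℋ_R into ℋ_L ⊗ ℂ|Φ^i[m]⟩ ⊗ ℋ_R. Let |Ψ⟩ = Σ_{m∈Ω_i} |Γ[m]⟩ where |Γ[m]⟩ ∈ ℋ_L ⊗ ℂ|Φ^i[m]⟩ ⊗ ℋ_R. If for a fixed m_i ∈ Ω_i it holds that M_{m_k}|Γ[m]⟩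 and all its components lie in sectors with apparatus state |Φ^i[m]⟩, and the vector Σ_{m_k}(M_{m_k}|Ψ⟩)⊗|Φ^k[m_k]⟩ lies entirely in the sector ℋ_L ⊗ ℂ|Φ^i[m_i]⟩ ⊗ ℋ_R ⊗ ℋ_k, then |Γ[m]⟩ = 0 for all m ≠ m_i, so |Ψ⟩ ∈ ℋ_L ⊗ ℂ|Φ^i[m_i]⟩ ⊗ ℋ_R. -/
open scoped ComplexInnerProductSpace

/-- Unchanged apparatus states propagate backward (apparatus case): let `K` be
the composite space `ℋ_L ⊗ ℋ_i ⊗ ℋ_R` decomposed into pairwise orthogonal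
sectors `Sector m = ℋ_L ⊗ ℂ|Φ^i[m]⟩ ⊗ ℋ_R` indexed by `m ∈ Ω_i`, let
`{M_{m_k}}` be measurement operators on `K` satisfying the completeness
equation and preserving each sector, and let `K₂ = K ⊗ ℋ_k` carry the
tensor-product inner-product structure with orthonormal family `{Φ^k[m_k]}` in
`ℋ_k`. If `Ψ = Σ_m Γ[m]` with `Γ[m] ∈ Sector m`, and the post-measurement
vector `Σ_{m_k} (M_{m_k} Ψ) ⊗ Φ^k[m_k]` lies entirely in the sector of `m_i`,
then `Γ[m] = 0` for all `m ≠ m_i`, and hence `Ψ ∈ Sector m_i`. -/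
theorem stmt15 {K Hk K2 : Type*}
    [NormedAddCommGroup K] [InnerProductSpace ℂ K] [FiniteDimensional ℂ K]
    [NormedAddCommGroup Hk] [InnerProductSpace ℂ Hk] [FiniteDimensional ℂ Hk]
    [NormedAddCommGroup K2] [InnerProductSpace ℂ K2] [FiniteDimensional ℂ K2]
    {Ωi Ωk : Type*} [Fintype Ωi] [Fintype Ωk]
    (Sector : Ωi → Submodule ℂ K)
    (horth : ∀ m m' : Ωi, m ≠ m' →
      ∀ x ∈ Sector m, ∀ y ∈ Sector m', ⟪x, y⟫ = (0 : ℂ))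
    (M : Ωk → K →ₗ[ℂ] K)
    (hcomp : ∑ mk : Ωk, LinearMap.adjoint (M mk) ∘ₗ M mk = LinearMap.id)
    (hsector : ∀ (m : Ωi) (mk : Ωk), ∀ x ∈ Sector m, M mk x ∈ Sector m)
    (tmul : K →ₗ[ℂ] Hk →ₗ[ℂ] K2)
    (htmul : ∀ (x y : K) (u v : Hk),
      ⟪tmul x u, tmul y v⟫ = ⟪x, y⟫ * ⟪u, v⟫)
    (Φk : Ωk → Hk) (hΦk : Orthonormal ℂ Φk)
    (Γ : Ωi → K) (hΓ : ∀ m : Ωi, Γ m ∈ Sector m)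
    (Ψ : K) (hΨ : Ψ = ∑ m : Ωi, Γ m)
    (mi : Ωi)
    (hpost : (∑ mk : Ωk, tmul (M mk Ψ) (Φk mk)) ∈
      Submodule.span ℂ
        {z : K2 | ∃ v ∈ Sector mi, ∃ a : Hk, z = tmul v a}) :
    (∀ m : Ωi, m ≠ mi → Γ m = 0) ∧ Ψ ∈ Sector mi := by

  classical
  have key : ∀ m : Ωi, m ≠ mi → Γ m = 0 := by
    intro m hm
    have hMzero : ∀ mk : Ωk, M mk (Γ m) = 0 := by
      intro mk
      have hperp : ∀ z ∈ Submodule.span ℂ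
          {z : K2 | ∃ v ∈ Sector mi, ∃ a : Hk, z = tmul v a},
          ⟪tmul (M mk (Γ m)) (Φk mk), z⟫ = (0 : ℂ) := by
        intro z hz
        induction hz using Submodule.span_induction with
        | mem z hz =>
          obtain ⟨v, hv, a, rfl⟩ := hz
          rw [htmul, horth m mi hm _ (hsector m mk _ (hΓ m)) v hv, zero_mul]
        | zero => simp
        | add x y _ _ hx hy => rw [inner_add_right, hx, hy, add_zero]
        | smul c x _ hx => rw [inner_smul_right, hx, mul_zero]
      have h0 := hperp _ hpost
      rw [inner_sum] at h0
      have horthk := orthonormal_iff_ite.mp hΦk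
      have hsum : ∑ mk' : Ωk, ⟪tmul (M mk (Γ m)) (Φk mk), tmul (M mk' Ψ) (Φk mk')⟫
          = ⟪M mk (Γ m), M mk Ψ⟫ := by
        rw [Finset.sum_eq_single mk]
        · rw [htmul, horthk, if_pos rfl, mul_one]
        · intro b _ hb
          rw [htmul, horthk, if_neg (fun h => hb h.symm), mul_zero]
        · simp
      rw [hsum] at h0
      have hΨsum : ⟪M mk (Γ m), M mk Ψ⟫ = ⟪M mk (Γ m), M mk (Γ m)⟫ := by
        rw [hΨ, map_sum, inner_sum, Finset.sum_eq_single m]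
        · intro b _ hb
          exact horth m b (fun h => hb h.symm) _ (hsector m mk _ (hΓ m)) _
            (hsector b mk _ (hΓ b))
        · simp
      rw [hΨsum] at h0
      exact inner_self_eq_zero.mp h0
    have := congrArg (fun f => f (Γ m)) hcomp
    simp only [LinearMap.sum_apply, LinearMap.comp_apply, LinearMap.id_apply] at this
    calc Γ m = ∑ mk : Ωk, LinearMap.adjoint (M mk) (M mk (Γ m)) := this.symm
    _ = 0 := by simp [hMzero]
  refine ⟨key, ?_⟩
  rw [hΨ]
  apply Submodule.sum_mem
  intro m _
  by_cases h : m = mi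
  · subst h; exact hΓ m
  · rw [key m h]; exact Submodule.zero_mem _
end

section
/- The measurement operators of the combined Wigner+Deutsch observer do not form a PVM: with ℋ_S a qubit, ℋ_F containing orthonormal |Φ^F[0]⟩, |Φ^F[1]⟩, M^W_l (l=0,1) the projections I_S ⊗ |Φ^F[l]⟩⟨Φ^F[l]|, M^W_2 = I_{S+F} − M^W_0 − M^W_1 (as operators on ℋ_S⊗ℋ_F after tensoring with I_S appropriately), and M^D_± as the projections onto and complementary to |Ψ^{S+F}[+]⟩ = (|0⟩⊗|Φ^F[0]⟩+|1⟩⊗|Φ^F[1]⟩)/√2: the family M^{W+D}_{l,m} = M^D_m ∘ (I_S ⊗ M^W_l), indexed by (l,m) ∈ {0,1,2}×{+,−}, satisfies the completeness equation Σ_{l,m}(M^{W+D}_{l,m})† M^{W+D}_{l,m} = I_{S+F}, but there exists (l,m) with (M^{W+D}_{l,m})² ≠ M^{W+D}_{l,m} (equivalently some M^{W+D}_{l,m} is not a projector), so {M^{W+D}_{l,m}} is not a PVM. -/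
open scoped ComplexInnerProductSpace
open ContinuousLinearMap InnerProductSpace

/-! `M^D_+ = |Ψ⟩⟨Ψ|` is a star projection, so summing `(M^D_m W_l)† (M^D_m W_l)` over `m` leaves
`W_l²`; as `W_0, W_1` are orthogonal idempotents, `W_0² + W_1² + (1 - W_0 - W_1)² = 1`.
On the other hand `M^D_+ W_0 = |Ψ⟩⟨W_0 Ψ|` has rank one, so it is idempotent only if
`⟪W_0 Ψ, Ψ⟫ = 1`, whereas this overlap is `1/2`. -/

theorem IsStarProjection.star_mul_add_star_one_sub_mul {R : Type*} [Ring R] [StarRing R]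
    {p : R} (hp : IsStarProjection p) (t : R) :
    star (p * t) * (p * t) + star ((1 - p) * t) * ((1 - p) * t) = star t * t := by
  have key : ∀ {q : R}, IsStarProjection q → star (q * t) * (q * t) = star t * q * t := by
    intro q hq
    rw [star_mul, hq.isSelfAdjoint.star_eq, mul_assoc, ← mul_assoc q, hq.isIdempotentElem.eq,
      mul_assoc]
  rw [key hp, key hp.one_sub, ← add_mul, ← mul_add, add_sub_cancel, mul_one]

theorem mul_self_add_mul_self_add_one_sub_sub_mul_self {R : Type*} [Ring R] {a b : R}
    (ha : IsIdempotentElem a) (hb : IsIdempotentElem b) (hab : a * b = 0) (hba : b * a = 0) :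
    a * a + b * b + (1 - a - b) * (1 - a - b) = 1 := by
  have expand : (1 - a - b) * (1 - a - b) =
      1 - a - b - (a - a * a - b * a) - (b - a * b - b * b) := by
    noncomm_ring
  rw [expand, ha.eq, hb.eq, hab, hba]
  noncomm_ring

theorem InnerProductSpace.isIdempotentElem_rankOne_iff {𝕜 E : Type*} [RCLike 𝕜]
    [NormedAddCommGroup E] [InnerProductSpace 𝕜 E] {x y : E} (hx : x ≠ 0) (hy : y ≠ 0) :
    IsIdempotentElem (rankOne 𝕜 x y) ↔ inner 𝕜 y x = 1 := by
  rw [IsIdempotentElem, mul_def, rankOne_comp_rankOne, ← sub_eq_zero]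
  nth_rw 2 [← one_smul 𝕜 (rankOne 𝕜 x y)]
  rw [← sub_smul, smul_eq_zero, sub_eq_zero, or_iff_left (rankOne_ne_zero hx hy)]

section TensorProductLike

variable {HS HF K : Type*}
  [NormedAddCommGroup HS] [InnerProductSpace ℂ HS]
  [NormedAddCommGroup HF] [InnerProductSpace ℂ HF]
  [NormedAddCommGroup K] [InnerProductSpace ℂ K]
  {tmul : HS →ₗ[ℂ] HF →ₗ[ℂ] K}

theorem ContinuousLinearMap.ext_on_tmul
    (hK : Submodule.span ℂ {z : K | ∃ (x : HS) (u : HF), z = tmul x u} = ⊤)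
    {T U : K →L[ℂ] K} (h : ∀ x u, T (tmul x u) = U (tmul x u)) : T = U := by
  refine coe_injective (LinearMap.ext_on hK ?_)
  rintro z ⟨x, u, rfl⟩
  exact h x u

theorem Orthonormal.tmul_diag {ι : Type*}
    (htmul : ∀ (x y : HS) (u v : HF), ⟪tmul x u, tmul y v⟫ = ⟪x, y⟫ * ⟪u, v⟫)
    {e : ι → HS} {Φ : ι → HF} (he : Orthonormal ℂ e) (hΦ : Orthonormal ℂ Φ) :
    Orthonormal ℂ fun i => tmul (e i) (Φ i) := by
  classical
  rw [orthonormal_iff_ite] at he hΦ ⊢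
  intro i j
  rw [htmul, he, hΦ]
  split_ifs <;> simp

variable {a b : HF} {A B : K →L[ℂ] K}

theorem isIdempotentElem_of_apply_tmul
    (hK : Submodule.span ℂ {z : K | ∃ (x : HS) (u : HF), z = tmul x u} = ⊤) (ha : ‖a‖ = 1)
    (hA : ∀ x u, A (tmul x u) = ⟪a, u⟫ • tmul x a) : IsIdempotentElem A :=
  ext_on_tmul hK fun x u => by simp [hA, ha]

theorem mul_eq_zero_of_apply_tmul
    (hK : Submodule.span ℂ {z : K | ∃ (x : HS) (u : HF), z = tmul x u} = ⊤) (hab : ⟪a, b⟫ = 0)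
    (hA : ∀ x u, A (tmul x u) = ⟪a, u⟫ • tmul x a)
    (hB : ∀ x u, B (tmul x u) = ⟪b, u⟫ • tmul x b) : A * B = 0 :=
  ext_on_tmul hK fun x u => by simp [hA, hB, hab]

end TensorProductLike

section Bell
variable {E : Type*} [NormedAddCommGroup E] [InnerProductSpace ℂ E] {v : Fin 2 → E}

theorem Orthonormal.norm_inv_sqrt_two_smul_add (hv : Orthonormal ℂ v) :
    ‖((√2 : ℝ) : ℂ)⁻¹ • (v 0 + v 1)‖ = 1 := by
  have hsq : ‖v 0 + v 1‖ * ‖v 0 + v 1‖ = 2 := by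
    rw [norm_add_sq_eq_norm_sq_add_norm_sq_of_inner_eq_zero _ _ (hv.2 zero_ne_one), hv.1, hv.1]
    norm_num
  rw [norm_smul, ← Real.sqrt_mul_self (norm_nonneg (v 0 + v 1)), hsq, norm_inv,
    Complex.norm_real, Real.norm_of_nonneg (Real.sqrt_nonneg 2)]
  exact inv_mul_cancel₀ (by positivity)

theorem Orthonormal.inner_inv_sqrt_two_smul_add (hv : Orthonormal ℂ v) :
    ⟪((√2 : ℝ) : ℂ)⁻¹ • v 0, ((√2 : ℝ) : ℂ)⁻¹ • (v 0 + v 1)⟫ = 2⁻¹ := by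
  have h2 : ((√2 : ℝ) : ℂ) * (√2 : ℝ) = 2 := by
    rw [← Complex.ofReal_mul, Real.mul_self_sqrt zero_le_two, Complex.ofReal_ofNat]
  simp only [inner_smul_left, inner_smul_right, inner_add_right, orthonormal_iff_ite.mp hv,
    map_inv₀, Complex.conj_ofReal]
  norm_num [← mul_inv, h2]

end Bell

theorem stmt19_general {HS HF K : Type*}
    [NormedAddCommGroup HS] [InnerProductSpace ℂ HS]
    [NormedAddCommGroup HF] [InnerProductSpace ℂ HF]
    [NormedAddCommGroup K] [InnerProductSpace ℂ K] [FiniteDimensional ℂ K]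
    (e : Fin 2 → HS) (he : Orthonormal ℂ e)
    (Φ : Fin 2 → HF) (hΦ : Orthonormal ℂ Φ)
    (tmul : HS →ₗ[ℂ] HF →ₗ[ℂ] K)
    (htmul : ∀ (x y : HS) (u v : HF),
      ⟪tmul x u, tmul y v⟫ = ⟪x, y⟫ * ⟪u, v⟫)
    (hKspan : Submodule.span ℂ {z : K | ∃ (x : HS) (u : HF), z = tmul x u} = ⊤)
    (W : Fin 3 → K →L[ℂ] K)
    (hW0 : ∀ (x : HS) (u : HF), W 0 (tmul x u) = ⟪Φ 0, u⟫ • tmul x (Φ 0))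
    (hW1 : ∀ (x : HS) (u : HF), W 1 (tmul x u) = ⟪Φ 1, u⟫ • tmul x (Φ 1))
    (hW2 : W 2 = ContinuousLinearMap.id ℂ K - W 0 - W 1)
    (hWsa : ∀ l : Fin 3, IsSelfAdjoint (W l))
    (Ψ : K)
    (hΨ : Ψ = ((Real.sqrt 2 : ℂ))⁻¹ • (tmul (e 0) (Φ 0) + tmul (e 1) (Φ 1)))
    (MD : Bool → K →L[ℂ] K)
    (hMDp : ∀ z : K, MD true z = ⟪Ψ, z⟫ • Ψ)
    (hMDm : MD false = ContinuousLinearMap.id ℂ K - MD true)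
    (MWD : Fin 3 → Bool → K →L[ℂ] K)
    (hMWD : ∀ (l : Fin 3) (m : Bool), MWD l m = MD m ∘L W l) :
    (∑ l : Fin 3, ∑ m : Bool,
        adjoint (MWD l m) ∘L MWD l m = ContinuousLinearMap.id ℂ K) ∧
    ¬ ∀ (l : Fin 3) (m : Bool), MWD l m ∘L MWD l m = MWD l m := by
  have hv := Orthonormal.tmul_diag htmul he hΦ
  have hΨ1 : ‖Ψ‖ = 1 := hΨ ▸ hv.norm_inv_sqrt_two_smul_add
  have hMD : MD true = rankOne ℂ Ψ Ψ := ext hMDp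
  refine ⟨?_, fun hidem => ?_⟩
  · have hsum_m : ∀ l, ∑ m : Bool, adjoint (MWD l m) ∘L MWD l m = W l * W l := fun l => by
      simpa [hMWD, hMDm, hMD, ← one_def, ← mul_def, star_eq_adjoint, (hWsa l).star_eq]
        using (isStarProjection_rankOne_self hΨ1).star_mul_add_star_one_sub_mul (W l)
    rw [Finset.sum_congr rfl fun l _ => hsum_m l, Fin.sum_univ_three, hW2, ← one_def]
    exact mul_self_add_mul_self_add_one_sub_sub_mul_self
      (isIdempotentElem_of_apply_tmul hKspan (hΦ.1 0) hW0)
      (isIdempotentElem_of_apply_tmul hKspan (hΦ.1 1) hW1)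
      (mul_eq_zero_of_apply_tmul hKspan (hΦ.2 zero_ne_one) hW0 hW1)
      (mul_eq_zero_of_apply_tmul hKspan (hΦ.2 one_ne_zero) hW1 hW0)
  · have hW0Ψ : W 0 Ψ = ((√2 : ℝ) : ℂ)⁻¹ • tmul (e 0) (Φ 0) := by
      simp [hΨ, hW0, hΦ.1 0, hΦ.2 zero_ne_one]
    have hMWD0 : MWD 0 true = rankOne ℂ Ψ (W 0 Ψ) := by
      rw [hMWD, hMD, rankOne_comp, (hWsa 0).adjoint_eq]
    have hne : W 0 Ψ ≠ 0 := by
      rw [hW0Ψ]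
      exact smul_ne_zero (by simp) (hv.ne_zero 0)
    have hoverlap := (isIdempotentElem_rankOne_iff (norm_ne_zero_iff.mp (hΨ1.trans_ne one_ne_zero))
      hne).mp (hMWD0 ▸ hidem 0 true)
    rw [hW0Ψ, hΨ, hv.inner_inv_sqrt_two_smul_add] at hoverlap
    norm_num at hoverlap

/-- The measurement operators of the combined Wigner+Deutsch observer do not
form a PVM: let `K = ℋ_S ⊗ ℋ_F` carry the tensor-product inner-product
structure, with `ℋ_S` a qubit with orthonormal basis `{|0⟩,|1⟩}` and `ℋ_F`
containing orthonormal `|Φ^F[0]⟩, |Φ^F[1]⟩`. Let `W_l = I_S ⊗ |Φ^F[l]⟩⟨Φ^F[l]|`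
for `l = 0,1`, `W_2 = I − W_0 − W_1`, and let `M^D_±` (with `+` encoded as
`true`) be the projection onto `|Ψ^{S+F}[+]⟩ = (|0⟩⊗|Φ^F[0]⟩+|1⟩⊗|Φ^F[1]⟩)/√2`
and its complement. Then the family `M^{W+D}_{l,m} = M^D_m ∘ W_l` satisfies the
completeness equation, but some `M^{W+D}_{l,m}` is not idempotent, hence the
family is not a PVM. -/
theorem stmt19 {HS HF K : Type*}
    [NormedAddCommGroup HS] [InnerProductSpace ℂ HS] [FiniteDimensional ℂ HS]
    [NormedAddCommGroup HF] [InnerProductSpace ℂ HF] [FiniteDimensional ℂ HF]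
    [NormedAddCommGroup K] [InnerProductSpace ℂ K] [FiniteDimensional ℂ K]
    (e : Fin 2 → HS) (he : Orthonormal ℂ e)
    (hespan : Submodule.span ℂ (Set.range e) = ⊤)
    (Φ : Fin 2 → HF) (hΦ : Orthonormal ℂ Φ)
    (tmul : HS →ₗ[ℂ] HF →ₗ[ℂ] K)
    (htmul : ∀ (x y : HS) (u v : HF),
      ⟪tmul x u, tmul y v⟫ = ⟪x, y⟫ * ⟪u, v⟫)
    (hKspan : Submodule.span ℂ {z : K | ∃ (x : HS) (u : HF), z = tmul x u} = ⊤)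
    (W : Fin 3 → K →L[ℂ] K)
    (hW0 : ∀ (x : HS) (u : HF), W 0 (tmul x u) = ⟪Φ 0, u⟫ • tmul x (Φ 0))
    (hW1 : ∀ (x : HS) (u : HF), W 1 (tmul x u) = ⟪Φ 1, u⟫ • tmul x (Φ 1))
    (hW2 : W 2 = ContinuousLinearMap.id ℂ K - W 0 - W 1)
    (hWsa : ∀ l : Fin 3, IsSelfAdjoint (W l))
    (Ψ : K)
    (hΨ : Ψ = ((Real.sqrt 2 : ℂ))⁻¹ • (tmul (e 0) (Φ 0) + tmul (e 1) (Φ 1)))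
    (MD : Bool → K →L[ℂ] K)
    (hMDp : ∀ z : K, MD true z = ⟪Ψ, z⟫ • Ψ)
    (hMDm : MD false = ContinuousLinearMap.id ℂ K - MD true)
    (MWD : Fin 3 → Bool → K →L[ℂ] K)
    (hMWD : ∀ (l : Fin 3) (m : Bool), MWD l m = MD m ∘L W l) :
    (∑ l : Fin 3, ∑ m : Bool,
        adjoint (MWD l m) ∘L MWD l m = ContinuousLinearMap.id ℂ K) ∧
    ¬ ∀ (l : Fin 3) (m : Bool), MWD l m ∘L MWD l m = MWD l m :=
  stmt19_general e he Φ hΦ tmul htmul hKspan W hW0 hW1 hW2 hWsa Ψ hΨ MD hMDp hMDm MWD hMWD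
end
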